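/- Suppose the state functions x1, x2, x3, x4 : ℝ → ℝ are differentiable and satisfy the linear system x1'(t) = x2(t), x2'(t) = v1(t), x3'(t) = x4(t), x4'(t) = v2(t), and that cos(x1(t)) ≠ 0 for all t. Let θ_q, θ_r : ℝ → ℝ be differentiable functions with θ_q'(t) = q_a(t) and θ_r'(t) = r_a(t) (the elevation and azimuth LOS angles), let θ_q^d, θ_r^d : ℝ → ℝ be twice-differentiable desired trajectories, and let c1, c2, c3, c4 > 0 be real constants. If the controls are chosen as v1(t) = −g1(t) + (θ_q^d)''(t) + c1·((θ_q^d)'(t) − θ_q'(t)) + c2·(θ_q^d(t) − θ_q(t)) and v2(t) = (1/cos(x1(t)))·(−g2(t) + (θ_r^d)''(t) + c3·((θ_r^d)'(t) − θ_r'(t)) + c4·(θ_r^d(t) − θ_r(t))), then the errors e_q(t) = θ_q^d(t) − θ_q(t) and e_r(t) = θ_r^d(t) − θ_r(t) are twice differentiable and satisfy the second-order differential equations e_q''(t) + c1·e_q'(t) + c2·e_q(t) = 0 and e_r''(t) + c3·e_r'(t) + c4·e_r(t) = 0 for all t. -/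

import Mathlib

/-!
Differentiating the sensor rates `q_a`, `r_a` along the platform motion gives
`q_a' = g1 + v1` and `r_a' = g2 + v2 cos x1`: the auxiliary functions `g1`, `g2` collect every
term of the derivative except the one carrying the control. The feedback laws cancel `g1`, `g2`
(dividing by `cos x1 ≠ 0` in the yaw channel) and impose the commanded LOS acceleration, so each
tracking error obeys the linear equation `e'' + c e' + k e = 0`.
-/

open Real

theorem hasDerivAt_pitch_rate {p q x2 x3 : ℝ → ℝ} {p' q' v x4 t : ℝ}
    (hp : HasDerivAt p p' t) (hq : HasDerivAt q q' t)
    (hx2 : HasDerivAt x2 v t) (hx3 : HasDerivAt x3 x4 t) :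
    HasDerivAt (fun s => -p s * sin (x3 s) + q s * cos (x3 s) + x2 s)
      ((-p' * sin (x3 t) - x4 * p t * cos (x3 t) + q' * cos (x3 t) - x4 * q t * sin (x3 t))
        + v) t := by
  refine (((hp.neg.mul hx3.sin).add (hq.mul hx3.cos)).add hx2).congr_deriv ?_
  simp only [Pi.neg_apply]
  ring

theorem hasDerivAt_yaw_rate {p q r x1 x2 x3 x4 : ℝ → ℝ} {p' q' r' v t : ℝ}
    (hp : HasDerivAt p p' t) (hq : HasDerivAt q q' t) (hr : HasDerivAt r r' t)
    (hx1 : HasDerivAt x1 (x2 t) t) (hx3 : HasDerivAt x3 (x4 t) t) (hx4 : HasDerivAt x4 v t) :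
    HasDerivAt (fun s => p s * cos (x3 s) * sin (x1 s) + q s * sin (x3 s) * sin (x1 s)
        + r s * cos (x1 s) + x4 s * cos (x1 s))
      (((p' * cos (x3 t) - x4 t * p t * sin (x3 t) + q' * sin (x3 t)
            + x4 t * q t * cos (x3 t)) * sin (x1 t)
          + (p t * cos (x3 t) + q t * sin (x3 t)) * x2 t * cos (x1 t)
          - x2 t * r t * sin (x1 t) - x2 t * x4 t * sin (x1 t) + r' * cos (x1 t))
        + v * cos (x1 t)) t := by
  refine (((((hp.mul hx3.cos).mul hx1.sin).add ((hq.mul hx3.sin).mul hx1.sin)).add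
    (hr.mul hx1.cos)).add (hx4.mul hx1.cos)).congr_deriv ?_
  simp only [Pi.mul_apply]
  ring

theorem tracking_error_dynamics {θd θd' θd'' θ ω ω' e : ℝ → ℝ} {c k : ℝ}
    (hθd : ∀ t, HasDerivAt θd (θd' t) t) (hθd' : ∀ t, HasDerivAt θd' (θd'' t) t)
    (hθ : ∀ t, HasDerivAt θ (ω t) t) (hω : ∀ t, HasDerivAt ω (ω' t) t)
    (hω' : ∀ t, ω' t = θd'' t + c * (θd' t - ω t) + k * (θd t - θ t))
    (he : ∀ t, e t = θd t - θ t) :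
    (∀ t, DifferentiableAt ℝ e t) ∧ (∀ t, DifferentiableAt ℝ (deriv e) t) ∧
      ∀ t, deriv (deriv e) t + c * deriv e t + k * e t = 0 := by
  obtain rfl : e = fun s => θd s - θ s := funext he
  have he' : ∀ t, HasDerivAt (fun s => θd s - θ s) (θd' t - ω t) t :=
    fun t => (hθd t).sub (hθ t)
  have hde : deriv (fun s => θd s - θ s) = fun s => θd' s - ω s :=
    funext fun t => (he' t).deriv
  have he'' : ∀ t, HasDerivAt (fun s => θd' s - ω s) (θd'' t - ω' t) t :=
    fun t => (hθd' t).sub (hω t)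
  refine ⟨fun t => (he' t).differentiableAt, fun t => hde ▸ (he'' t).differentiableAt,
    fun t => ?_⟩
  rw [hde, (he'' t).deriv, hω' t]
  ring

theorem los_tracking_error_dynamics_general
    (p q r p' q' r' : ℝ → ℝ)
    (hp : ∀ t, HasDerivAt p (p' t) t)
    (hq : ∀ t, HasDerivAt q (q' t) t)
    (hr : ∀ t, HasDerivAt r (r' t) t)
    (x1 x2 x3 x4 v1 v2 g1 g2 qa ra : ℝ → ℝ)
    (hx1 : ∀ t, HasDerivAt x1 (x2 t) t)
    (hx2 : ∀ t, HasDerivAt x2 (v1 t) t)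
    (hx3 : ∀ t, HasDerivAt x3 (x4 t) t)
    (hx4 : ∀ t, HasDerivAt x4 (v2 t) t)
    (hcos : ∀ t, cos (x1 t) ≠ 0)
    (hqa : ∀ t, qa t = -(p t) * sin (x3 t) + q t * cos (x3 t) + x2 t)
    (hra : ∀ t, ra t =
      p t * cos (x3 t) * sin (x1 t) + q t * sin (x3 t) * sin (x1 t)
        + r t * cos (x1 t) + x4 t * cos (x1 t))
    (hg1 : ∀ t, g1 t =
      -p' t * sin (x3 t) - x4 t * p t * cos (x3 t)
        + q' t * cos (x3 t) - x4 t * q t * sin (x3 t))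
    (hg2 : ∀ t, g2 t =
      (p' t * cos (x3 t) - x4 t * p t * sin (x3 t) + q' t * sin (x3 t)
          + x4 t * q t * cos (x3 t)) * sin (x1 t)
        + (p t * cos (x3 t) + q t * sin (x3 t)) * x2 t * cos (x1 t)
        - x2 t * r t * sin (x1 t) - x2 t * x4 t * sin (x1 t)
        + r' t * cos (x1 t))
    (thq thr : ℝ → ℝ)
    (hthq : ∀ t, HasDerivAt thq (qa t) t)
    (hthr : ∀ t, HasDerivAt thr (ra t) t)
    (thqd thrd thqd' thrd' thqd'' thrd'' : ℝ → ℝ)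
    (hthqd : ∀ t, HasDerivAt thqd (thqd' t) t)
    (hthrd : ∀ t, HasDerivAt thrd (thrd' t) t)
    (hthqd' : ∀ t, HasDerivAt thqd' (thqd'' t) t)
    (hthrd' : ∀ t, HasDerivAt thrd' (thrd'' t) t)
    (c1 c2 c3 c4 : ℝ)
    (hv1 : ∀ t, v1 t =
      -g1 t + thqd'' t + c1 * (thqd' t - deriv thq t) + c2 * (thqd t - thq t))
    (hv2 : ∀ t, v2 t = (1 / cos (x1 t)) *
      (-g2 t + thrd'' t + c3 * (thrd' t - deriv thr t) + c4 * (thrd t - thr t)))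
    (eq er : ℝ → ℝ)
    (heq : ∀ t, eq t = thqd t - thq t)
    (her : ∀ t, er t = thrd t - thr t) :
    (∀ t, DifferentiableAt ℝ eq t) ∧ (∀ t, DifferentiableAt ℝ (deriv eq) t) ∧
    (∀ t, DifferentiableAt ℝ er t) ∧ (∀ t, DifferentiableAt ℝ (deriv er) t) ∧
    (∀ t, deriv (deriv eq) t + c1 * deriv eq t + c2 * eq t = 0) ∧
    (∀ t, deriv (deriv er) t + c3 * deriv er t + c4 * er t = 0) := by
  obtain rfl : qa = _ := funext hqa
  obtain rfl : ra = _ := funext hra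
  have hqa' : ∀ t, HasDerivAt _ (g1 t + v1 t) t := fun t => hg1 t ▸
    hasDerivAt_pitch_rate (hp t) (hq t) (hx2 t) (hx3 t)
  have hra' : ∀ t, HasDerivAt _ (g2 t + v2 t * cos (x1 t)) t := fun t => hg2 t ▸
    hasDerivAt_yaw_rate (hp t) (hq t) (hr t) (hx1 t) (hx3 t) (hx4 t)
  obtain ⟨hdeq, hddeq, hq_dyn⟩ := tracking_error_dynamics (k := c2) hthqd hthqd' hthq hqa'
    (fun t => by rw [hv1 t, (hthq t).deriv]; ring) heq
  obtain ⟨hder, hdder, hr_dyn⟩ := tracking_error_dynamics (k := c4) hthrd hthrd' hthr hra'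
    (fun t => by rw [hv2 t, (hthr t).deriv]; field_simp [hcos t]; ring) her
  exact ⟨hdeq, hddeq, hder, hdder, hq_dyn, hr_dyn⟩

/-- Theorem 2 (error dynamics): with the LOS-tracking feedback controls, the
elevation and azimuth tracking errors are twice differentiable and satisfy the
second-order error dynamics `e'' + c·e' + c'·e = 0`. -/
theorem los_tracking_error_dynamics
    (p q r p' q' r' : ℝ → ℝ)
    (hp : ∀ t, HasDerivAt p (p' t) t)
    (hq : ∀ t, HasDerivAt q (q' t) t)
    (hr : ∀ t, HasDerivAt r (r' t) t)
    (x1 x2 x3 x4 v1 v2 g1 g2 qa ra : ℝ → ℝ)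
    (hx1 : ∀ t, HasDerivAt x1 (x2 t) t)
    (hx2 : ∀ t, HasDerivAt x2 (v1 t) t)
    (hx3 : ∀ t, HasDerivAt x3 (x4 t) t)
    (hx4 : ∀ t, HasDerivAt x4 (v2 t) t)
    (hcos : ∀ t, cos (x1 t) ≠ 0)
    (hqa : ∀ t, qa t = -(p t) * sin (x3 t) + q t * cos (x3 t) + x2 t)
    (hra : ∀ t, ra t =
      p t * cos (x3 t) * sin (x1 t) + q t * sin (x3 t) * sin (x1 t)
        + r t * cos (x1 t) + x4 t * cos (x1 t))
    (hg1 : ∀ t, g1 t =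
      -p' t * sin (x3 t) - x4 t * p t * cos (x3 t)
        + q' t * cos (x3 t) - x4 t * q t * sin (x3 t))
    (hg2 : ∀ t, g2 t =
      (p' t * cos (x3 t) - x4 t * p t * sin (x3 t) + q' t * sin (x3 t)
          + x4 t * q t * cos (x3 t)) * sin (x1 t)
        + (p t * cos (x3 t) + q t * sin (x3 t)) * x2 t * cos (x1 t)
        - x2 t * r t * sin (x1 t) - x2 t * x4 t * sin (x1 t)
        + r' t * cos (x1 t))
    (thq thr : ℝ → ℝ)
    (hthq : ∀ t, HasDerivAt thq (qa t) t)
    (hthr : ∀ t, HasDerivAt thr (ra t) t)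
    (thqd thrd thqd' thrd' thqd'' thrd'' : ℝ → ℝ)
    (hthqd : ∀ t, HasDerivAt thqd (thqd' t) t)
    (hthrd : ∀ t, HasDerivAt thrd (thrd' t) t)
    (hthqd' : ∀ t, HasDerivAt thqd' (thqd'' t) t)
    (hthrd' : ∀ t, HasDerivAt thrd' (thrd'' t) t)
    (c1 c2 c3 c4 : ℝ) (hc1 : 0 < c1) (hc2 : 0 < c2) (hc3 : 0 < c3) (hc4 : 0 < c4)
    (hv1 : ∀ t, v1 t =
      -g1 t + thqd'' t + c1 * (thqd' t - deriv thq t) + c2 * (thqd t - thq t))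
    (hv2 : ∀ t, v2 t = (1 / cos (x1 t)) *
      (-g2 t + thrd'' t + c3 * (thrd' t - deriv thr t) + c4 * (thrd t - thr t)))
    (eq er : ℝ → ℝ)
    (heq : ∀ t, eq t = thqd t - thq t)
    (her : ∀ t, er t = thrd t - thr t) :
    (∀ t, DifferentiableAt ℝ eq t) ∧ (∀ t, DifferentiableAt ℝ (deriv eq) t) ∧
    (∀ t, DifferentiableAt ℝ er t) ∧ (∀ t, DifferentiableAt ℝ (deriv er) t) ∧
    (∀ t, deriv (deriv eq) t + c1 * deriv eq t + c2 * eq t = 0) ∧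
    (∀ t, deriv (deriv er) t + c3 * deriv er t + c4 * er t = 0) :=
  los_tracking_error_dynamics_general p q r p' q' r' hp hq hr x1 x2 x3 x4 v1 v2 g1 g2 qa ra hx1 hx2
    hx3 hx4 hcos hqa hra hg1 hg2 thq thr hthq hthr thqd thrd thqd' thrd' thqd'' thrd'' hthqd hthrd
    hthqd' hthrd' c1 c2 c3 c4 hv1 hv2 eq er heq her
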